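/- arXiv:2311.04831 — 3 statements merged into one kernel-verified Lean document; each statement's English description precedes it below -/
import Mathlib

section
/- Let X be a real random variable with finite moments of all orders and let n be a positive integer. Then K_n(X) = E[X^n] − Σ_{m=1}^{n−1} C(n−1, m−1)·K_m(X)·E[X^{n−m}], where C(·,·) denotes the binomial coefficient. In particular, the moments of X determine its cumulants and vice versa. -/
open MeasureTheory ProbabilityTheory

noncomputable section

/-- The characteristic function of a measure `μ` on `ℝ`. -/
def charFn (μ : Measure ℝ) (t : ℝ) : ℂ :=
  ∫ x, Complex.exp (Complex.I * t * x) ∂μ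

/-- The `n`-th cumulant of a measure `μ` on `ℝ`: `(-i)^n` times the `n`-th derivative at `0`
of `t ↦ log φ_μ(t)`, where `log` is the principal branch of the complex logarithm. -/
def cumulant (n : ℕ) (μ : Measure ℝ) : ℝ :=
  ((-Complex.I) ^ n *
    iteratedDeriv n (fun t : ℝ => Complex.log (charFn μ t)) 0).re

/-- A measure on `ℝ` has finite moments of all orders. -/
def HasMoments (μ : Measure ℝ) : Prop :=
  ∀ p : ℕ, Integrable (fun x => x ^ p) μ

/-- A (law of a) real random variable is `SMD` if it is symmetric, has finite moments of
all orders, and is determined by its moments. -/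
def SMD (μ : Measure ℝ) : Prop :=
  IsProbabilityMeasure μ ∧
  Measure.map (fun x : ℝ => -x) μ = μ ∧
  HasMoments μ ∧
  ∀ ν : Measure ℝ, IsProbabilityMeasure ν → HasMoments ν →
    (∀ p : ℕ, 0 < p → ∫ x, x ^ p ∂ν = ∫ x, x ^ p ∂μ) → ν = μ

/-- `mmse(μ, s)`: on the product of `μ` with a standard Gaussian, with `X = fst` and
`N = snd`, set `Y_s = √s X + N`; then `mmse(μ, s) = E[(X - E[X | σ(Y_s)])²]`. -/
def mmse (μ : Measure ℝ) (s : ℝ) : ℝ :=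
  ∫ p, (p.1 -
      (MeasureTheory.condExp
        (MeasurableSpace.comap (fun q : ℝ × ℝ => Real.sqrt s * q.1 + q.2) inferInstance)
        (μ.prod (gaussianReal 0 1)) (fun q : ℝ × ℝ => q.1)) p) ^ 2
    ∂(μ.prod (gaussianReal 0 1))

section Helpers

open Complex Topology

variable {μ : Measure ℝ}

def FF (μ : Measure ℝ) (n : ℕ) (t : ℝ) : ℂ :=
  ∫ x, (Complex.I * x) ^ n * Complex.exp (Complex.I * t * x) ∂μ

variable {μ : Measure ℝ}

lemma absint (hmom : HasMoments μ) (n : ℕ) :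
    Integrable (fun x : ℝ => |x| ^ n) μ := by
  have := (hmom n).abs
  refine this.congr ?_
  filter_upwards with x
  simp [abs_pow]

lemma norm_integrand (n : ℕ) (t x : ℝ) :
    ‖(Complex.I * x) ^ n * Complex.exp (Complex.I * t * x)‖ = |x| ^ n := by
  rw [norm_mul, norm_pow, norm_mul,
    Complex.norm_exp, Complex.norm_I, Complex.norm_real]
  simp

lemma cont_integrand (n : ℕ) (t : ℝ) :
    Continuous (fun x : ℝ => (Complex.I * x) ^ n * Complex.exp (Complex.I * t * x)) := by
  fun_prop

lemma integrable_integrand (hmom : HasMoments μ) (n : ℕ) (t : ℝ) :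
    Integrable (fun x : ℝ => (Complex.I * x) ^ n * Complex.exp (Complex.I * t * x)) μ := by
  refine (absint hmom n).mono' (cont_integrand n t).aestronglyMeasurable ?_
  filter_upwards with x
  rw [norm_integrand]

lemma hasDerivAt_FF (hmom : HasMoments μ) (n : ℕ) (t : ℝ) :
    HasDerivAt (FF μ n) (FF μ (n + 1) t) t := by
  have key := hasDerivAt_integral_of_dominated_loc_of_deriv_le (μ := μ)
      (F := fun (t : ℝ) (x : ℝ) => (Complex.I * x) ^ n * Complex.exp (Complex.I * t * x))
      (F' := fun (t : ℝ) (x : ℝ) => (Complex.I * x) ^ (n+1) * Complex.exp (Complex.I * t * x))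
      (x₀ := t) (bound := fun x => |x| ^ (n+1)) Filter.univ_mem
      (Filter.Eventually.of_forall fun s => (cont_integrand n s).aestronglyMeasurable)
      (integrable_integrand hmom n t)
      (cont_integrand (n+1) t).aestronglyMeasurable
      (Filter.Eventually.of_forall fun x => fun s _ => le_of_eq (norm_integrand (n+1) s x))
      (absint hmom (n+1))
      (Filter.Eventually.of_forall fun x => fun s _ => ?_)
  · exact key.2
  · -- HasDerivAt (fun s => (I x)^n * exp (I s x)) ((I x)^(n+1) * exp (I s x)) s
    have h1 : HasDerivAt (fun z : ℂ => Complex.exp (Complex.I * z * x))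
        (Complex.exp (Complex.I * s * x) * (Complex.I * x)) (s : ℂ) := by
      have h0 : HasDerivAt (fun z : ℂ => Complex.I * z * (x:ℂ)) (Complex.I * x) (s : ℂ) := by
        simpa using ((hasDerivAt_id (s:ℂ)).const_mul Complex.I).mul_const (x : ℂ)
      simpa using h0.cexp
    have h2 := (h1.comp_ofReal).const_mul ((Complex.I * x) ^ n)
    convert h2 using 1
    · rfl
    · ring

lemma deriv_FF (hmom : HasMoments μ) (n : ℕ) :
    deriv (FF μ n) = FF μ (n + 1) := by
  funext t
  exact (hasDerivAt_FF hmom n t).deriv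

lemma contDiff_FF (hmom : HasMoments μ) (m n : ℕ) : ContDiff ℝ m (FF μ n) := by
  induction m generalizing n with
  | zero =>
    exact contDiff_zero.2 (Differentiable.continuous (fun t => (hasDerivAt_FF hmom n t).differentiableAt))
  | succ m ih =>
    have hcast : ((m + 1 : ℕ) : WithTop ℕ∞) = (m : WithTop ℕ∞) + 1 := by push_cast; rfl
    rw [hcast, contDiff_succ_iff_deriv]
    refine ⟨fun t => (hasDerivAt_FF hmom n t).differentiableAt, ?_, ?_⟩
    · intro h
      exact absurd h (by exact_mod_cast WithTop.natCast_ne_top m)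
    · rw [deriv_FF hmom]; exact ih (n + 1)

lemma charFn_eq (μ : Measure ℝ) : charFn μ = FF μ 0 := by
  funext t; simp [charFn, FF]

lemma iteratedDeriv_charFn (hmom : HasMoments μ) (n : ℕ) :
    iteratedDeriv n (charFn μ) = FF μ n := by
  induction n with
  | zero => simp [charFn_eq]
  | succ n ih => rw [iteratedDeriv_succ, ih, deriv_FF hmom]

lemma FF_zero (hmom : HasMoments μ) (n : ℕ) :
    FF μ n 0 = Complex.I ^ n * ((∫ x, x ^ n ∂μ : ℝ) : ℂ) := by
  have : ∀ x : ℝ, (Complex.I * x) ^ n * Complex.exp (Complex.I * (0:ℝ) * x)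
      = Complex.I ^ n * ((x ^ n : ℝ) : ℂ) := by
    intro x; push_cast; rw [mul_pow]; simp
  rw [FF]
  simp only [this]
  rw [integral_const_mul]
  congr 1
  exact integral_ofReal (𝕜 := ℂ)


lemma iteratedDerivWithin_of_isOpen' {s : Set ℝ} (hs : IsOpen s) {x : ℝ} (hx : x ∈ s)
    (n : ℕ) (f : ℝ → ℂ) : iteratedDerivWithin n f s x = iteratedDeriv n f x := by
  simp only [iteratedDerivWithin, iteratedDeriv, iteratedFDerivWithin_of_isOpen n hs hx]

lemma contDiffAt_ne_infty (m : ℕ) : ((m : WithTop ℕ∞)) = (⊤ : ℕ∞) → False := by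
  intro h
  exact absurd h (by exact_mod_cast WithTop.natCast_ne_top m)

lemma iteratedDerivAt_add {n : ℕ} {f g : ℝ → ℂ} {x : ℝ}
    (hf : ContDiffAt ℝ n f x) (hg : ContDiffAt ℝ n g x) :
    iteratedDeriv n (fun t => f t + g t) x = iteratedDeriv n f x + iteratedDeriv n g x := by
  obtain ⟨u, hu, hfu⟩ := hf.contDiffOn le_rfl (fun h => absurd h (by
    exact_mod_cast fun hh => contDiffAt_ne_infty n hh))
  obtain ⟨v, hv, hgv⟩ := hg.contDiffOn le_rfl (fun h => absurd h (by
    exact_mod_cast fun hh => contDiffAt_ne_infty n hh))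
  set s := interior (u ∩ v) with hs_def
  have hso : IsOpen s := isOpen_interior
  have hxs : x ∈ s := mem_interior_iff_mem_nhds.2 (Filter.inter_mem hu hv)
  have h1 : iteratedDeriv n (fun t => f t + g t) x
      = iteratedDerivWithin n (f + g) s x := by
    rw [iteratedDerivWithin_of_isOpen' hso hxs]; rfl
  rw [h1, iteratedDerivWithin_add hxs hso.uniqueDiffOn
      ((hfu.mono (interior_subset.trans Set.inter_subset_left)).contDiffWithinAt hxs)
      ((hgv.mono (interior_subset.trans Set.inter_subset_right)).contDiffWithinAt hxs),
    iteratedDerivWithin_of_isOpen' hso hxs, iteratedDerivWithin_of_isOpen' hso hxs]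


lemma contDiffAt_deriv' {f : ℝ → ℂ} {x : ℝ} {m : ℕ} (hf : ContDiffAt ℝ (m + 1) f x) :
    ContDiffAt ℝ m (deriv f) x := by
  obtain ⟨u, hu, hfu⟩ := hf.contDiffOn le_rfl (fun h => absurd h (by
    exact_mod_cast fun hh => contDiffAt_ne_infty (m+1) hh))
  have hs : IsOpen (interior u) := isOpen_interior
  have hxs : x ∈ interior u := mem_interior_iff_mem_nhds.2 hu
  have hfu' : ContDiffOn ℝ ((m : WithTop ℕ∞) + 1) f (interior u) := by
    have : ((m + 1 : ℕ) : WithTop ℕ∞) = (m : WithTop ℕ∞) + 1 := by push_cast; rfl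
    exact this ▸ hfu.mono interior_subset
  have := ((contDiffOn_succ_iff_deriv_of_isOpen hs).1 hfu').2.2
  exact this.contDiffAt (hs.mem_nhds hxs)

lemma choose_sum_aux (A : ℕ → ℂ) (n : ℕ) :
    ∑ k ∈ Finset.range (n + 2), (((n + 1).choose k : ℕ) : ℂ) * A k
      = ∑ k ∈ Finset.range (n + 1), ((n.choose k : ℕ) : ℂ) * A (k + 1)
        + ∑ k ∈ Finset.range (n + 1), ((n.choose k : ℕ) : ℂ) * A k := by
  rw [Finset.sum_range_succ' (fun k => (((n + 1).choose k : ℕ) : ℂ) * A k) (n + 1)]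
  have h : ∀ i, (((n + 1).choose (i + 1) : ℕ) : ℂ) = (n.choose i : ℂ) + (n.choose (i + 1) : ℂ) := by
    intro i
    rw [Nat.choose_succ_succ]
    push_cast
    ring
  simp_rw [h, add_mul, Finset.sum_add_distrib]
  rw [Finset.sum_range_succ' (fun k => ((n.choose k : ℕ) : ℂ) * A k) n]
  rw [Finset.sum_range_succ (fun i => ((n.choose (i + 1) : ℕ) : ℂ) * A (i + 1)) n]
  simp [Nat.choose_succ_self]
  ring

lemma iteratedDeriv_mul_at {f g : ℝ → ℂ} {x : ℝ}
    (hf : ∀ m : ℕ, ContDiffAt ℝ m f x) (hg : ∀ m : ℕ, ContDiffAt ℝ m g x) (n : ℕ) :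
    iteratedDeriv n (fun t => f t * g t) x
      = ∑ k ∈ Finset.range (n + 1),
          ((n.choose k : ℕ) : ℂ) * (iteratedDeriv k f x * iteratedDeriv (n - k) g x) := by
  induction n generalizing f g with
  | zero => simp
  | succ n ih =>
    have hf' : ∀ m : ℕ, ContDiffAt ℝ m (deriv f) x := fun m => contDiffAt_deriv' (hf (m + 1))
    have hg' : ∀ m : ℕ, ContDiffAt ℝ m (deriv g) x := fun m => contDiffAt_deriv' (hg (m + 1))
    have heq : deriv (fun t => f t * g t) =ᶠ[𝓝 x]
        (fun t => deriv f t * g t + f t * deriv g t) := by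
      have h1 : ∀ᶠ y in 𝓝 x, ContDiffAt ℝ 1 f y := (hf 1).eventually (by simp)
      have h2 : ∀ᶠ y in 𝓝 x, ContDiffAt ℝ 1 g y := (hg 1).eventually (by simp)
      filter_upwards [h1, h2] with y hfy hgy
      exact deriv_fun_mul (hfy.differentiableAt one_ne_zero) (hgy.differentiableAt one_ne_zero)
    rw [iteratedDeriv_succ', Filter.EventuallyEq.iteratedDeriv_eq n heq,
      iteratedDerivAt_add (((hf' n).mul (hg n)) : ContDiffAt ℝ n _ x)
        ((hf n).mul (hg' n)),
      ih hf' hg, ih hf hg']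
    have e1 : ∀ k, iteratedDeriv k (deriv f) x = iteratedDeriv (k + 1) f x := by
      intro k; rw [iteratedDeriv_succ']
    have e2 : ∀ k, iteratedDeriv k (deriv g) x = iteratedDeriv (k + 1) g x := by
      intro k; rw [iteratedDeriv_succ']
    simp_rw [e1, e2]
    rw [show n + 1 + 1 = n + 2 from rfl, choose_sum_aux
      (fun k => iteratedDeriv k f x * iteratedDeriv (n + 1 - k) g x) n]
    congr 1
    · refine Finset.sum_congr rfl fun k hk => ?_
      have h : n + 1 - (k + 1) = n - k := by omega
      rw [h]
    · refine Finset.sum_congr rfl fun k hk => ?_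
      have hk' : k ≤ n := Nat.lt_succ_iff.mp (Finset.mem_range.mp hk)
      have h : n + 1 - k = n - k + 1 := by omega
      rw [h]



lemma charFn_zero (μ : Measure ℝ) [IsProbabilityMeasure μ] : charFn μ 0 = 1 := by
  simp [charFn]

lemma charFn_zero_mem : (1 : ℂ) ∈ Complex.slitPlane := by
  rw [Complex.mem_slitPlane_iff]; simp

lemma contDiffAt_charFn (hmom : HasMoments μ) (m : ℕ) (x : ℝ) :
    ContDiffAt ℝ m (charFn μ) x := by
  rw [charFn_eq]
  exact (contDiff_FF hmom m 0).contDiffAt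

lemma contDiffAt_psi [IsProbabilityMeasure μ] (hmom : HasMoments μ) (m : ℕ) :
    ContDiffAt ℝ m (fun t : ℝ => Complex.log (charFn μ t)) 0 := by
  have hlog : ContDiffAt ℂ m Complex.log (charFn μ 0) := by
    rw [charFn_zero]
    exact Complex.contDiffAt_log charFn_zero_mem
  exact (hlog.restrict_scalars ℝ).comp 0 (contDiffAt_charFn hmom m 0)

lemma deriv_charFn_eventually [IsProbabilityMeasure μ] (hmom : HasMoments μ) :
    deriv (charFn μ) =ᶠ[𝓝 (0:ℝ)]
      fun t => deriv (fun s : ℝ => Complex.log (charFn μ s)) t * charFn μ t := by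
  have hcont : ContinuousAt (charFn μ) 0 := ((contDiffAt_charFn hmom 0 0)).continuousAt
  have hopen : ∀ᶠ t in 𝓝 (0:ℝ), charFn μ t ∈ Complex.slitPlane := by
    apply hcont.eventually_mem
    rw [charFn_zero]
    exact Complex.isOpen_slitPlane.mem_nhds charFn_zero_mem
  have hdiff : ∀ᶠ t in 𝓝 (0:ℝ), ContDiffAt ℝ 1 (charFn μ) t :=
    (contDiffAt_charFn hmom 1 0).eventually (by simp)
  filter_upwards [hopen, hdiff] with t hst hdt
  have hφd : HasDerivAt (charFn μ) (deriv (charFn μ) t) t :=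
    (hdt.differentiableAt one_ne_zero).hasDerivAt
  have hψd := hφd.clog_real hst
  rw [hψd.deriv, div_mul_cancel₀ _ (Complex.slitPlane_ne_zero hst)]

/-- The key recursion. -/
lemma cumulant_rec (μ : Measure ℝ) [IsProbabilityMeasure μ] (hmom : HasMoments μ)
    (n : ℕ) (hn : 0 < n) :
    cumulant n μ
      = (∫ x, x ^ n ∂μ)
        - ∑ m ∈ Finset.Ico 1 n,
            ((n - 1).choose (m - 1) : ℝ) * cumulant m μ * ∫ x, x ^ (n - m) ∂μ := by
  obtain ⟨N, rfl⟩ := Nat.exists_eq_succ_of_ne_zero hn.ne'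
  set ψ : ℝ → ℂ := fun t => Complex.log (charFn μ t) with hψdef
  set Mo : ℕ → ℝ := fun j => ∫ x, x ^ j ∂μ with hModef
  have hψcd : ∀ m : ℕ, ContDiffAt ℝ m ψ 0 := fun m => contDiffAt_psi hmom m
  have hψ'cd : ∀ m : ℕ, ContDiffAt ℝ m (deriv ψ) 0 := fun m => contDiffAt_deriv' (hψcd (m+1))
  have hφcd : ∀ m : ℕ, ContDiffAt ℝ m (charFn μ) 0 := fun m => contDiffAt_charFn hmom m 0
  have hD : ∀ j : ℕ, iteratedDeriv j (charFn μ) 0 = Complex.I ^ j * ((Mo j : ℝ) : ℂ) := by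
    intro j; rw [iteratedDeriv_charFn hmom, FF_zero hmom]
  have hid : Complex.I ^ (N+1) * ((Mo (N+1) : ℝ) : ℂ)
      = ∑ k ∈ Finset.range (N + 1), ((N.choose k : ℕ) : ℂ) *
          (iteratedDeriv (k+1) ψ 0 * (Complex.I ^ (N-k) * ((Mo (N-k) : ℝ) : ℂ))) := by
    rw [← hD (N+1), iteratedDeriv_succ',
      Filter.EventuallyEq.iteratedDeriv_eq N (deriv_charFn_eventually hmom),
      iteratedDeriv_mul_at hψ'cd hφcd N]
    refine Finset.sum_congr rfl fun k hk => ?_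
    rw [← iteratedDeriv_succ', hD (N-k)]
  set c : ℕ → ℂ := fun j => (-Complex.I) ^ j * iteratedDeriv j ψ 0 with hcdef
  have hcre : ∀ j, cumulant j μ = (c j).re := fun j => rfl
  have hmi : ((-Complex.I) * Complex.I) = 1 := by
    simp [Complex.I_mul_I]
  have hq : ((Mo (N+1) : ℝ) : ℂ)
      = ∑ k ∈ Finset.range (N + 1), ((N.choose k : ℕ) : ℂ) *
          (c (k+1) * ((Mo (N-k) : ℝ) : ℂ)) := by
    have expand : ∀ k ∈ Finset.range (N+1),
        ((N.choose k : ℕ) : ℂ) * (c (k+1) * ((Mo (N-k) : ℝ) : ℂ))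
        = (-Complex.I) ^ (N+1) * (((N.choose k : ℕ) : ℂ) *
            (iteratedDeriv (k+1) ψ 0 * (Complex.I ^ (N-k) * ((Mo (N-k) : ℝ) : ℂ)))) := by
      intro k hk
      have hk' : k ≤ N := Nat.lt_succ_iff.mp (Finset.mem_range.mp hk)
      have hsplit : (-Complex.I) ^ (N+1) = (-Complex.I) ^ (k+1) * (-Complex.I) ^ (N-k) := by
        rw [← pow_add]; congr 1; omega
      have hone : (-Complex.I) ^ (N-k) * Complex.I ^ (N-k) = 1 := by
        rw [← mul_pow, hmi, one_pow]
      rw [hcdef, hsplit]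
      calc ((N.choose k : ℕ) : ℂ) * ((-Complex.I) ^ (k+1) * iteratedDeriv (k+1) ψ 0 *
              ((Mo (N-k) : ℝ) : ℂ))
          = ((N.choose k : ℕ) : ℂ) * ((-Complex.I) ^ (k+1) * iteratedDeriv (k+1) ψ 0 *
              (((-Complex.I) ^ (N-k) * Complex.I ^ (N-k)) * ((Mo (N-k) : ℝ) : ℂ))) := by
            rw [hone]; ring
        _ = (-Complex.I) ^ (k+1) * (-Complex.I) ^ (N-k) * (((N.choose k : ℕ) : ℂ) *
              (iteratedDeriv (k+1) ψ 0 * (Complex.I ^ (N-k) * ((Mo (N-k) : ℝ) : ℂ)))) := by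
            ring
    rw [Finset.sum_congr rfl expand, ← Finset.mul_sum, ← hid]
    rw [← mul_assoc, ← mul_pow, hmi, one_pow, one_mul]
  have hre : Mo (N+1) = ∑ k ∈ Finset.range (N + 1),
      ((N.choose k : ℝ) * Mo (N-k)) * cumulant (k+1) μ := by
    have h := congrArg Complex.re hq
    rw [Complex.ofReal_re, Complex.re_sum] at h
    rw [h]
    refine Finset.sum_congr rfl fun k hk => ?_
    have : ((N.choose k : ℕ) : ℂ) * (c (k+1) * ((Mo (N-k) : ℝ) : ℂ))
        = (((N.choose k : ℝ) * Mo (N-k) : ℝ) : ℂ) * c (k+1) := by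
      push_cast; ring
    rw [this, Complex.re_ofReal_mul, hcre]
  have hre2 : Mo (N+1) = ∑ m ∈ Finset.Ico 1 (N+2),
      ((N.choose (m-1) : ℝ) * Mo (N+1-m)) * cumulant m μ := by
    rw [Finset.sum_Ico_eq_sum_range]
    have hrange : N + 2 - 1 = N + 1 := by omega
    rw [hrange, hre]
    refine Finset.sum_congr rfl fun k hk => ?_
    have e1 : 1 + k - 1 = k := by omega
    have e2 : N + 1 - (1 + k) = N - k := by omega
    have e3 : 1 + k = k + 1 := by omega
    rw [e1, e2, e3]
  have hMo0 : Mo 0 = 1 := by simp [hModef]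
  rw [Finset.sum_Ico_succ_top (by omega : 1 ≤ N + 1)] at hre2
  have hlast : ((N.choose (N+1-1) : ℝ) * Mo (N+1-(N+1))) * cumulant (N+1) μ
      = cumulant (N+1) μ := by
    have e1 : N + 1 - 1 = N := by omega
    have e2 : N + 1 - (N+1) = 0 := by omega
    rw [e1, e2, Nat.choose_self, hMo0]
    simp
  rw [hlast] at hre2
  have hsum : ∑ m ∈ Finset.Ico 1 (N+1),
        ((N + 1 - 1).choose (m - 1) : ℝ) * cumulant m μ * Mo (N + 1 - m)
      = ∑ m ∈ Finset.Ico 1 (N+1),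
        ((N.choose (m-1) : ℝ) * Mo (N+1-m)) * cumulant m μ := by
    refine Finset.sum_congr rfl fun m hm => ?_
    have e1 : N + 1 - 1 = N := by omega
    rw [e1]; ring
  show cumulant (N+1) μ = Mo (N+1) - ∑ m ∈ Finset.Ico 1 (N+1),
      ((N + 1 - 1).choose (m - 1) : ℝ) * cumulant m μ * Mo (N + 1 - m)
  rw [hsum]
  linarith [hre2]

end Helpers

/-- Relation between moments and cumulants:
`K_n(X) = E[Xⁿ] - ∑_{m=1}^{n-1} C(n-1, m-1) K_m(X) E[X^{n-m}]`; in particular, the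
moments determine the cumulants and vice versa. -/
theorem statement7 (μ : Measure ℝ) [IsProbabilityMeasure μ] (hmom : HasMoments μ) :
    (∀ n : ℕ, 0 < n →
        cumulant n μ
          = (∫ x, x ^ n ∂μ)
            - ∑ m ∈ Finset.Ico 1 n,
                ((n - 1).choose (m - 1) : ℝ) * cumulant m μ * ∫ x, x ^ (n - m) ∂μ)
    ∧ (∀ ν : Measure ℝ, IsProbabilityMeasure ν → HasMoments ν →
        ((∀ p : ℕ, 0 < p → ∫ x, x ^ p ∂ν = ∫ x, x ^ p ∂μ)
          ↔ (∀ p : ℕ, 0 < p → cumulant p ν = cumulant p μ))) := by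
  refine ⟨fun n hn => cumulant_rec μ hmom n hn, fun ν hνp hνm => ?_⟩
  constructor
  · intro hmoeq p
    induction p using Nat.strong_induction_on with
    | _ p ih =>
      intro hp
      rw [cumulant_rec ν hνm p hp, cumulant_rec μ hmom p hp, hmoeq p hp]
      congr 1
      refine Finset.sum_congr rfl fun m hm => ?_
      obtain ⟨h1, h2⟩ := Finset.mem_Ico.mp hm
      rw [ih m h2 h1, hmoeq (p - m) (by omega)]
  · intro hcueq p
    induction p using Nat.strong_induction_on with
    | _ p ih =>
      intro hp
      have h1 := cumulant_rec ν hνm p hp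
      have h2 := cumulant_rec μ hmom p hp
      have h3 : ∑ m ∈ Finset.Ico 1 p,
            ((p-1).choose (m-1) : ℝ) * cumulant m ν * ∫ x, x ^ (p-m) ∂ν
          = ∑ m ∈ Finset.Ico 1 p,
            ((p-1).choose (m-1) : ℝ) * cumulant m μ * ∫ x, x ^ (p-m) ∂μ := by
        refine Finset.sum_congr rfl fun m hm => ?_
        obtain ⟨hm1, hm2⟩ := Finset.mem_Ico.mp hm
        rw [hcueq m hm1, ih (p-m) (by omega) (by omega)]
      have h4 := hcueq p hp
      linarith [h1, h2, h3]

end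
end

section
/- Let n ≥ 3 be an integer and let j be an integer with 3 ≤ j ≤ n. Then for every α ∈ I_{j,n}, the coefficient c_α^{(n)} is non-negative if j is even and non-positive if j is odd. -/
open MvPolynomial

noncomputable section

/-- Linear extension to polynomials of a map defined on exponent vectors (monomials). -/
def extendMon (f : (ℕ →₀ ℕ) → MvPolynomial ℕ ℝ) (P : MvPolynomial ℕ ℝ) :
    MvPolynomial ℕ ℝ :=
  ∑ d ∈ P.support, P.coeff d • f d

/-- Action of `D₁` on the monomial with exponent vector `d`. -/
def D1mon (d : ℕ →₀ ℕ) : MvPolynomial ℕ ℝ :=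
  ∑ i ∈ d.support,
    (d i : ℝ) • monomial (d - Finsupp.single i 1 + Finsupp.single (i + 1) 1) (1 : ℝ)

/-- Action of `D₂` on the monomial with exponent vector `d`. -/
def D2mon (d : ℕ →₀ ℕ) : MvPolynomial ℕ ℝ :=
  ∑ i ∈ d.support,
    (d i : ℝ) • monomial (d - Finsupp.single i 1 + Finsupp.single (i + 2) 1) (1 : ℝ)

def D1op : MvPolynomial ℕ ℝ → MvPolynomial ℕ ℝ := extendMon D1mon

def D2op : MvPolynomial ℕ ℝ → MvPolynomial ℕ ℝ := extendMon D2mon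

/-- The operator `L = (D₁ ∘ D₁ - D₂)/2`. -/
def Lop (P : MvPolynomial ℕ ℝ) : MvPolynomial ℕ ℝ :=
  (1 / 2 : ℝ) • (D1op (D1op P) - D2op P)

/-- Action of `H` on the monomial with exponent vector `d`. -/
def Hmon (d : ℕ →₀ ℕ) : MvPolynomial ℕ ℝ :=
  (-(1 / 2) : ℝ) • ∑ i ∈ d.support, ∑ l ∈ Finset.Ico 1 i,
    ((d i : ℝ) * (i.choose l : ℝ)) •
      monomial (d - Finsupp.single i 1 + Finsupp.single (1 + l) 1
        + Finsupp.single (1 + i - l) 1) (1 : ℝ)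

def Hop : MvPolynomial ℕ ℝ → MvPolynomial ℕ ℝ := extendMon Hmon

/-- `A_n = -∑_{k=1}^{n-1} C(n,k) T_{1+k} T_{1+n-k} T_n`. -/
def Apoly (n : ℕ) : MvPolynomial ℕ ℝ :=
  - ∑ k ∈ Finset.Ico 1 n, (n.choose k : ℝ) • (X (1 + k) * X (1 + n - k) * X n)

/-- The polynomials `R_n`: `R_2 = 0` and `R_{n+1} = A_n + L(R_n) + H(R_n)` for `n ≥ 2`. -/
def Rpoly : ℕ → MvPolynomial ℕ ℝ
  | 0 => 0
  | 1 => 0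
  | 2 => 0
  | (n + 3) => Apoly (n + 2) + Lop (Rpoly (n + 2)) + Hop (Rpoly (n + 2))

/-- The monomial `T_α = T_{α₁} ⋯ T_{α_r}` attached to a tuple (multiset) `α`. -/
def Tmon (α : Multiset ℕ) : MvPolynomial ℕ ℝ := (α.map X).prod

/-- `c_α^{(n)}`: the coefficient of the monomial `T_α` in `R_n`. -/
def coeffR (n : ℕ) (α : Multiset ℕ) : ℝ :=
  MvPolynomial.coeff (Multiset.toFinsupp α) (Rpoly n)

/-- `l_{β,α}`: the coefficient of `T_α` in `L(T_β)`. -/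
def lcoef (β α : Multiset ℕ) : ℝ :=
  MvPolynomial.coeff (Multiset.toFinsupp α) (Lop (Tmon β))

/-- `h_{β,α}`: the coefficient of `T_α` in `H(T_β)`. -/
def hcoef (β α : Multiset ℕ) : ℝ :=
  MvPolynomial.coeff (Multiset.toFinsupp α) (Hop (Tmon β))

/-- `I_{r,n}`: partitions of `2n` of length `r` with parts between `2` and `n-1`. -/
def Ipart (r n : ℕ) : Finset (Multiset ℕ) :=
  ((Finset.univ : Finset (Nat.Partition (2 * n))).image Nat.Partition.parts).filter
    (fun m => Multiset.card m = r ∧ ∀ a ∈ m, 2 ≤ a ∧ a ≤ n - 1)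

/-- `I_n`: partitions of `2n` of length between `3` and `n`, parts between `2` and `n-1`. -/
def IpartAll (n : ℕ) : Finset (Multiset ℕ) :=
  ((Finset.univ : Finset (Nat.Partition (2 * n))).image Nat.Partition.parts).filter
    (fun m => 3 ≤ Multiset.card m ∧ Multiset.card m ≤ n ∧ ∀ a ∈ m, 2 ≤ a ∧ a ≤ n - 1)

/-- The polynomial `a_{n,k}`. -/
def ank (n k : ℕ) : MvPolynomial ℕ ℝ :=
  ∑ α ∈ (IpartAll (n + 1)).filter (fun α => (n - k) ∈ α ∧ ∀ a ∈ α, a ≤ n - k),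
    C (coeffR (n + 1) α) * Tmon (α.erase (n - k))

/-- The polynomial `a_n = a_{n,0} - c_{(n,n,2)}^{(n+1)} T_2 T_n`. -/
def aform (n : ℕ) : MvPolynomial ℕ ℝ :=
  ank n 0 - C (coeffR (n + 1) {n, n, 2}) * (X 2 * X n)


/-!
Call a polynomial sign-alternating if the coefficient of every monomial of degree `k` has the
sign of `(-1)^k`. Each of the three pieces of the recursion preserves this: `A_n` is cubic with
nonpositive coefficients; `L` preserves degrees and has nonnegative coefficients on monomials,
because every term of `D₂ T^d` already occurs in `D₁ D₁ T^d`; and `H` raises degrees by one with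
nonpositive coefficients. Hence every `R_n` is sign-alternating, and `T_α` has degree `|α| = j`.
-/

open Finsupp (single)

lemma Finsupp.degree_sub_single_add_single {d : ℕ →₀ ℕ} {i : ℕ} (hi : i ∈ d.support) (j : ℕ) :
    (d - single i 1 + single j 1).degree = d.degree := by
  have hle : single i 1 ≤ d := Finsupp.single_le_iff.mpr (Nat.one_le_iff_ne_zero.mpr
    (Finsupp.mem_support_iff.mp hi))
  have := congrArg Finsupp.degree (tsub_add_cancel_of_le hle)
  simp only [map_add, Finsupp.degree_single] at this ⊢
  omega

lemma Multiset.degree_toFinsupp (α : Multiset ℕ) : (Multiset.toFinsupp α).degree = α.card := by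
  conv_rhs => rw [← Multiset.toFinsupp_toMultiset α, Finsupp.card_toMultiset]
  rfl

def HasNonnegCoeffs (φ : MvPolynomial ℕ ℝ) : Prop := ∀ e, 0 ≤ coeff e φ

namespace HasNonnegCoeffs

variable {φ ψ : MvPolynomial ℕ ℝ}

lemma smul {c : ℝ} (hc : 0 ≤ c) (hφ : HasNonnegCoeffs φ) : HasNonnegCoeffs (c • φ) :=
  fun e => by rw [coeff_smul, smul_eq_mul]; exact mul_nonneg hc (hφ e)

lemma sum {ι : Type*} {s : Finset ι} {φ : ι → MvPolynomial ℕ ℝ}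
    (h : ∀ i ∈ s, HasNonnegCoeffs (φ i)) : HasNonnegCoeffs (∑ i ∈ s, φ i) :=
  fun e => by rw [coeff_sum]; exact Finset.sum_nonneg fun i hi => h i hi e

lemma mul (hφ : HasNonnegCoeffs φ) (hψ : HasNonnegCoeffs ψ) : HasNonnegCoeffs (φ * ψ) := by
  classical
  intro e
  rw [coeff_mul]
  exact Finset.sum_nonneg fun x _ => mul_nonneg (hφ x.1) (hψ x.2)

end HasNonnegCoeffs

lemma hasNonnegCoeffs_monomial (d : ℕ →₀ ℕ) {c : ℝ} (hc : 0 ≤ c) :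
    HasNonnegCoeffs (monomial d c) := by
  classical
  intro e
  rw [coeff_monomial]
  split_ifs <;> simp [hc]

lemma hasNonnegCoeffs_X (i : ℕ) : HasNonnegCoeffs (X i) :=
  hasNonnegCoeffs_monomial _ zero_le_one

lemma monomial_eq_smul_monomial_one (d : ℕ →₀ ℕ) (c : ℝ) :
    monomial d c = c • monomial d (1 : ℝ) := by
  rw [smul_monomial, smul_eq_mul, mul_one]

def SignAlternating (P : MvPolynomial ℕ ℝ) : Prop := ∀ e, 0 ≤ (-1 : ℝ) ^ e.degree * coeff e P

namespace SignAlternating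

variable {P Q : MvPolynomial ℕ ℝ}

lemma zero : SignAlternating 0 := fun e => by simp

lemma add (hP : SignAlternating P) (hQ : SignAlternating Q) : SignAlternating (P + Q) :=
  fun e => by rw [coeff_add, mul_add]; exact add_nonneg (hP e) (hQ e)

lemma smul {c : ℝ} (hc : 0 ≤ c) (hP : SignAlternating P) : SignAlternating (c • P) :=
  fun e => by rw [coeff_smul, smul_eq_mul, mul_left_comm]; exact mul_nonneg hc (hP e)

lemma sum {ι : Type*} {s : Finset ι} {P : ι → MvPolynomial ℕ ℝ}
    (h : ∀ i ∈ s, SignAlternating (P i)) : SignAlternating (∑ i ∈ s, P i) :=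
  fun e => by rw [coeff_sum, Finset.mul_sum]; exact Finset.sum_nonneg fun i hi => h i hi e

lemma map_of_monomial (φ : MvPolynomial ℕ ℝ →ₗ[ℝ] MvPolynomial ℕ ℝ)
    (hφ : ∀ d, SignAlternating ((-1 : ℝ) ^ d.degree • φ (monomial d 1)))
    (hP : SignAlternating P) : SignAlternating (φ P) := by
  have hsign : ∀ d : ℕ →₀ ℕ, ((-1 : ℝ) ^ d.degree) * (-1) ^ d.degree = 1 := fun d => by
    rw [← pow_add, ← two_mul, pow_mul, neg_one_sq, one_pow]
  have hsum : φ P = ∑ d ∈ P.support,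
      ((-1 : ℝ) ^ d.degree * coeff d P) • ((-1 : ℝ) ^ d.degree • φ (monomial d 1)) := by
    conv_lhs => rw [P.as_sum]
    simp only [map_sum, smul_smul]
    refine Finset.sum_congr rfl fun d _ => ?_
    rw [monomial_eq_smul_monomial_one, map_smul, mul_right_comm, hsign, one_mul]
  rw [hsum]
  exact sum fun d _ => (hφ d).smul (hP d)

end SignAlternating

lemma signAlternating_neg_one_pow_smul {φ : MvPolynomial ℕ ℝ} {k : ℕ} (hφ : φ.IsHomogeneous k)
    (h : HasNonnegCoeffs φ) : SignAlternating ((-1 : ℝ) ^ k • φ) := by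
  intro e
  rw [coeff_smul, smul_eq_mul]
  by_cases he : e.degree = k
  · rw [he, ← mul_assoc, ← pow_add, ← two_mul, pow_mul, neg_one_sq, one_pow, one_mul]
    exact h e
  · rw [hφ.coeff_eq_zero he, mul_zero, mul_zero]

def extendMonₗ (f : (ℕ →₀ ℕ) → MvPolynomial ℕ ℝ) : MvPolynomial ℕ ℝ →ₗ[ℝ] MvPolynomial ℕ ℝ :=
  (basisMonomials ℕ ℝ).constr ℝ f

lemma extendMonₗ_apply (f : (ℕ →₀ ℕ) → MvPolynomial ℕ ℝ) (P : MvPolynomial ℕ ℝ) :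
    extendMonₗ f P = extendMon f P := by
  rw [extendMonₗ, Module.Basis.constr_apply]
  rfl

lemma extendMon_monomial_one (f : (ℕ →₀ ℕ) → MvPolynomial ℕ ℝ) (d : ℕ →₀ ℕ) :
    extendMon f (monomial d 1) = f d := by
  have hbasis : monomial d (1 : ℝ) = basisMonomials ℕ ℝ d := by simp
  rw [← extendMonₗ_apply, extendMonₗ, hbasis, Module.Basis.constr_basis]

lemma MvPolynomial.IsHomogeneous.smul {σ R : Type*} [CommSemiring R] {φ : MvPolynomial σ R}
    {n : ℕ} (c : R) (hφ : φ.IsHomogeneous n) : (c • φ).IsHomogeneous n :=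
  (homogeneousSubmodule σ R n).smul_mem c hφ

lemma isHomogeneous_D1mon (d : ℕ →₀ ℕ) : (D1mon d).IsHomogeneous d.degree :=
  .sum _ _ _ fun _ hi =>
    .smul _ (isHomogeneous_monomial _ (Finsupp.degree_sub_single_add_single hi _))

lemma isHomogeneous_D2mon (d : ℕ →₀ ℕ) : (D2mon d).IsHomogeneous d.degree :=
  .sum _ _ _ fun _ hi =>
    .smul _ (isHomogeneous_monomial _ (Finsupp.degree_sub_single_add_single hi _))

lemma isHomogeneous_Hmon (d : ℕ →₀ ℕ) : (Hmon d).IsHomogeneous (d.degree + 1) := by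
  refine .smul _ (.sum _ _ _ fun i hi => .sum _ _ _ fun l _ =>
    .smul _ (isHomogeneous_monomial _ ?_))
  rw [map_add, Finsupp.degree_sub_single_add_single hi, Finsupp.degree_single]

lemma hasNonnegCoeffs_neg_Hmon (d : ℕ →₀ ℕ) : HasNonnegCoeffs (-Hmon d) := by
  rw [Hmon, ← neg_smul, neg_neg]
  exact .smul (by norm_num) (.sum fun _ _ => .sum fun _ _ =>
    .smul (by positivity) (hasNonnegCoeffs_monomial _ zero_le_one))

lemma isHomogeneous_D1op {P : MvPolynomial ℕ ℝ} {n : ℕ} (hP : P.IsHomogeneous n) :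
    (D1op P).IsHomogeneous n :=
  .sum _ _ _ fun d hd => .smul _ <| by
    have hdeg : d.degree = n := (hP.degree_eq_sum_deg_support hd).symm
    exact hdeg ▸ isHomogeneous_D1mon d

lemma hasNonnegCoeffs_D1mon_sub_monomial {m : ℕ →₀ ℕ} {j : ℕ} (hj : j ∈ m.support) :
    HasNonnegCoeffs (D1mon m - monomial (m - single j 1 + single (j + 1) 1) 1) := by
  intro e
  rw [coeff_sub, sub_nonneg, D1mon, coeff_sum]
  calc coeff e (monomial (m - single j 1 + single (j + 1) 1) (1 : ℝ))
      ≤ coeff e ((m j : ℝ) • monomial (m - single j 1 + single (j + 1) 1) (1 : ℝ)) := by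
        rw [coeff_smul, smul_eq_mul]
        exact le_mul_of_one_le_left (hasNonnegCoeffs_monomial _ zero_le_one e)
          (Nat.one_le_cast.mpr (Nat.one_le_iff_ne_zero.mpr (Finsupp.mem_support_iff.mp hj)))
    _ ≤ _ := Finset.single_le_sum (f := fun i => coeff e ((m i : ℝ) •
          monomial (m - single i 1 + single (i + 1) 1) (1 : ℝ)))
        (fun _ _ => (hasNonnegCoeffs_monomial _ zero_le_one).smul (Nat.cast_nonneg _) e) hj

/-- The term `T^{d - e_i + e_{i+2}}` of `D₂ T^d` arises in `D₁ D₁ T^d` through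
`T^{d - e_i + e_{i+1}}`. -/
lemma hasNonnegCoeffs_D1op_D1mon_sub_D2mon (d : ℕ →₀ ℕ) :
    HasNonnegCoeffs (D1op (D1mon d) - D2mon d) := by
  have hexpand : D1op (D1mon d) - D2mon d = ∑ i ∈ d.support, (d i : ℝ) •
        (D1mon (d - single i 1 + single (i + 1) 1) -
          monomial (d - single i 1 + single (i + 2) 1) 1) := by
    rw [D1op, ← extendMonₗ_apply, D1mon, D2mon, map_sum, ← Finset.sum_sub_distrib]
    refine Finset.sum_congr rfl fun i _ => ?_
    rw [map_smul, extendMonₗ_apply, extendMon_monomial_one, smul_sub]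
  rw [hexpand]
  refine .sum fun i hi => .smul (Nat.cast_nonneg _) ?_
  have hmem : i + 1 ∈ (d - single i 1 + single (i + 1) 1).support := by
    simp [Finsupp.mem_support_iff]
  have hstep := hasNonnegCoeffs_D1mon_sub_monomial hmem
  rwa [add_tsub_cancel_right] at hstep

def Lopₗ : MvPolynomial ℕ ℝ →ₗ[ℝ] MvPolynomial ℕ ℝ :=
  (1 / 2 : ℝ) • ((extendMonₗ D1mon).comp (extendMonₗ D1mon) - extendMonₗ D2mon)

lemma Lopₗ_apply (P : MvPolynomial ℕ ℝ) : Lopₗ P = Lop P := by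
  simp [Lopₗ, Lop, extendMonₗ_apply, D1op, D2op]

lemma signAlternating_Lop {P : MvPolynomial ℕ ℝ} (hP : SignAlternating P) :
    SignAlternating (Lop P) := by
  rw [← Lopₗ_apply]
  refine hP.map_of_monomial Lopₗ fun d => ?_
  rw [Lopₗ_apply, Lop, D1op, D2op, extendMon_monomial_one, extendMon_monomial_one, smul_comm]
  exact .smul (by norm_num) (signAlternating_neg_one_pow_smul
    ((isHomogeneous_D1op (isHomogeneous_D1mon d)).sub (isHomogeneous_D2mon d))
    (hasNonnegCoeffs_D1op_D1mon_sub_D2mon d))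

lemma signAlternating_Hop {P : MvPolynomial ℕ ℝ} (hP : SignAlternating P) :
    SignAlternating (Hop P) := by
  rw [Hop, ← extendMonₗ_apply]
  refine hP.map_of_monomial _ fun d => ?_
  rw [extendMonₗ_apply, extendMon_monomial_one,
    show (-1 : ℝ) ^ d.degree • Hmon d = (-1 : ℝ) ^ (d.degree + 1) • -Hmon d by
      rw [pow_succ]; simp]
  exact signAlternating_neg_one_pow_smul (isHomogeneous_Hmon d).neg (hasNonnegCoeffs_neg_Hmon d)

lemma signAlternating_Apoly (n : ℕ) : SignAlternating (Apoly n) := by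
  rw [Apoly, ← neg_one_smul ℝ, show (-1 : ℝ) = (-1) ^ 3 by norm_num]
  refine signAlternating_neg_one_pow_smul
    (.sum _ _ _ fun _ _ => .smul _ ?_)
    (.sum fun _ _ => .smul (Nat.cast_nonneg _) (((hasNonnegCoeffs_X _).mul
      (hasNonnegCoeffs_X _)).mul (hasNonnegCoeffs_X _)))
  exact ((isHomogeneous_X _ _).mul (isHomogeneous_X _ _)).mul (isHomogeneous_X _ _)

lemma signAlternating_Rpoly : ∀ n, SignAlternating (Rpoly n)
  | 0 | 1 | 2 => .zero
  | _ + 3 => ((signAlternating_Apoly _).add (signAlternating_Lop (signAlternating_Rpoly _))).add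
      (signAlternating_Hop (signAlternating_Rpoly _))

theorem statement14_general (n : ℕ) (j : ℕ)
    (α : Multiset ℕ) (hα : α ∈ Ipart j n) :
    (Even j → 0 ≤ coeffR n α) ∧ (Odd j → coeffR n α ≤ 0) := by
  have hcard : α.card = j := (Finset.mem_filter.mp hα).2.1
  have hsign := signAlternating_Rpoly n (Multiset.toFinsupp α)
  rw [Multiset.degree_toFinsupp, hcard] at hsign
  exact ⟨fun hj => by simpa [coeffR, hj.neg_one_pow] using hsign,
    fun hj => by simpa [coeffR, hj.neg_one_pow] using hsign⟩

/-- Sign of the coefficients of `R_n`: for `α ∈ I_{j,n}`, the coefficient `c_α^{(n)}` is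
non-negative if `j` is even, non-positive if `j` is odd. -/
theorem statement14 (n : ℕ) (hn : 3 ≤ n) (j : ℕ) (hj1 : 3 ≤ j) (hj2 : j ≤ n)
    (α : Multiset ℕ) (hα : α ∈ Ipart j n) :
    (Even j → 0 ≤ coeffR n α) ∧ (Odd j → coeffR n α ≤ 0) :=
  statement14_general n j α hα

end
end

section
/- Let n ≥ 2 be an integer, let k be an integer with 0 ≤ k ≤ n−2, let r be an integer with r > 3+k, and let α be an element of I_{r,n+1} with α_1 = n−k. Then c_α^{(n+1)} = 0. -/
open MvPolynomial

noncomputable section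

section MyAux
open Finsupp in
/-- abbreviation for single i 1 -/
local notation "e" => fun i => Finsupp.single i (1:ℕ)

lemma extendMon_eq_sum (f) (P : MvPolynomial ℕ ℝ) :
    extendMon f P = (AddMonoidAlgebra.coeff P).sum fun d c => c • f d := rfl

lemma extendMon_monomial (f) (d : ℕ →₀ ℕ) (c : ℝ) :
    extendMon f (monomial d c) = c • f d := by
  rcases eq_or_ne c 0 with h | h
  · simp [extendMon, h, support_monomial]
  · simp [extendMon, support_monomial, h]

lemma extendMon_add (f) (P Q : MvPolynomial ℕ ℝ) :
    extendMon f (P + Q) = extendMon f P + extendMon f Q := by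
  rw [extendMon_eq_sum, extendMon_eq_sum, extendMon_eq_sum, AddMonoidAlgebra.coeff_add]
  exact Finsupp.sum_add_index' (fun d => zero_smul _ _) (fun d c₁ c₂ => add_smul _ _ _)

lemma extendMon_sum (f) {ι : Type*} (s : Finset ι) (g : ι → MvPolynomial ℕ ℝ) :
    extendMon f (∑ i ∈ s, g i) = ∑ i ∈ s, extendMon f (g i) := by
  classical
  induction s using Finset.induction with
  | empty => simp [extendMon]
  | insert _ _ h ih => rw [Finset.sum_insert h, extendMon_add, ih, Finset.sum_insert h]

lemma mem_support_extendMon {f} {P : MvPolynomial ℕ ℝ} {d'}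
    (h : d' ∈ (extendMon f P).support) : ∃ d ∈ P.support, d' ∈ (f d).support := by
  by_contra hc
  push_neg at hc
  apply MvPolynomial.mem_support_iff.1 h
  rw [extendMon, MvPolynomial.coeff_sum]
  refine Finset.sum_eq_zero fun d hd => ?_
  rw [MvPolynomial.coeff_smul, MvPolynomial.notMem_support_iff.1 (hc d hd), smul_zero]
end MyAux
section MyAux2

def wdeg (d : ℕ →₀ ℕ) : ℕ := d.sum fun i c => i * c
def dgr (d : ℕ →₀ ℕ) : ℕ := d.sum fun _ c => c

lemma wdeg_add (a b : ℕ →₀ ℕ) : wdeg (a + b) = wdeg a + wdeg b :=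
  Finsupp.sum_add_index' (fun i => by simp) (fun i c₁ c₂ => Nat.mul_add i c₁ c₂)

lemma dgr_add (a b : ℕ →₀ ℕ) : dgr (a + b) = dgr a + dgr b :=
  Finsupp.sum_add_index' (fun i => rfl) (fun i c₁ c₂ => rfl)

lemma wdeg_single (i c : ℕ) : wdeg (Finsupp.single i c) = i * c :=
  Finsupp.sum_single_index (by simp)

lemma dgr_single (i c : ℕ) : dgr (Finsupp.single i c) = c :=
  Finsupp.sum_single_index rfl

lemma support_tsub_subset (d g : ℕ →₀ ℕ) : (d - g).support ⊆ d.support := by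
  intro j hj
  rw [Finsupp.mem_support_iff] at hj ⊢
  rw [Finsupp.tsub_apply] at hj
  omega

/-- the invariant predicate -/
def OKP (c W : ℕ) (P : MvPolynomial ℕ ℝ) : Prop :=
  ∀ d ∈ P.support, wdeg d ≤ W ∧ ∀ i ∈ d.support, 2 * (i + dgr d) ≤ wdeg d + c

lemma OKP_mono {c W c' W'} (hc : c ≤ c') (hW : W ≤ W') {P} (h : OKP c W P) :
    OKP c' W' P := fun d hd =>
  ⟨(h d hd).1.trans hW, fun i hi => ((h d hd).2 i hi).trans (by omega)⟩

lemma OKP_zero (c W : ℕ) : OKP c W 0 := by intro d hd; simp at hd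

lemma OKP_add {c W P Q} (hP : OKP c W P) (hQ : OKP c W Q) : OKP c W (P + Q) := by
  intro d hd
  rcases Finset.mem_union.1 (MvPolynomial.support_add hd) with h | h
  · exact hP d h
  · exact hQ d h

end MyAux2
section MyAux3

open Finsupp

def GoodL (d d' : ℕ →₀ ℕ) : Prop :=
  ∃ i j, Finsupp.single i 1 + Finsupp.single j 1 ≤ d ∧
    d' = d - (Finsupp.single i 1 + Finsupp.single j 1)
      + Finsupp.single (i + 1) 1 + Finsupp.single (j + 1) 1

lemma bad_good {d : ℕ →₀ ℕ} {i : ℕ} (hi : 1 ≤ d i) (hi1 : 1 ≤ d (i + 1)) :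
    GoodL d (d - Finsupp.single i 1 + Finsupp.single (i + 2) 1) := by
  refine ⟨i, i + 1, ?_, ?_⟩
  · rw [Finsupp.le_def]
    intro x
    simp only [Finsupp.add_apply, Finsupp.single_apply]
    split_ifs <;> subst_vars <;> omega
  · ext x
    simp only [Finsupp.add_apply, Finsupp.tsub_apply, Finsupp.single_apply]
    have hx1 : 1 ≤ d i := hi
    split_ifs <;> subst_vars <;> omega

lemma key_step {d d' : ℕ →₀ ℕ} {i j : ℕ} (hi : 1 ≤ d i)
    (hj : j ∈ (d - Finsupp.single i 1 + Finsupp.single (i + 1) 1).support)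
    (heq : d - Finsupp.single i 1 + Finsupp.single (i + 1) 1 - Finsupp.single j 1
      + Finsupp.single (j + 1) 1 = d') :
    GoodL d d' ∨ (j = i + 1 ∧ d (i + 1) = 0 ∧
      d' = d - Finsupp.single i 1 + Finsupp.single (i + 2) 1) := by
  have hform : ∀ (u : ℕ →₀ ℕ), u - Finsupp.single i 1 + Finsupp.single (i + 1) 1
      - Finsupp.single (i + 1) 1 + Finsupp.single (i + 2) 1
      = u - Finsupp.single i 1 + Finsupp.single (i + 2) 1 := by
    intro u
    ext x
    simp only [Finsupp.add_apply, Finsupp.tsub_apply, Finsupp.single_apply]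
    split_ifs <;> subst_vars <;> omega
  by_cases hcase : j = i + 1
  · subst hcase
    by_cases h0 : d (i + 1) = 0
    · exact Or.inr ⟨rfl, h0, by rw [← heq, hform]⟩
    · left
      rw [← heq, hform]
      exact bad_good hi (by omega)
  · left
    have hjv : 1 ≤ d j - (if i = j then 1 else 0) := by
      have := Finsupp.mem_support_iff.1 hj
      rw [Finsupp.add_apply, Finsupp.tsub_apply, Finsupp.single_apply,
        Finsupp.single_apply] at this
      split_ifs at this with h1 h2 <;> simp_all <;> omega
    refine ⟨i, j, ?_, ?_⟩
    · rw [Finsupp.le_def]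
      intro x
      simp only [Finsupp.add_apply, Finsupp.single_apply]
      by_cases hij : i = j
      · subst hij; split_ifs <;> simp_all <;> omega
      · simp only [hij, if_false] at hjv; split_ifs <;> subst_vars <;> omega
    · rw [← heq]
      ext x
      simp only [Finsupp.add_apply, Finsupp.tsub_apply, Finsupp.single_apply]
      by_cases hij : i = j
      · subst hij; simp only [if_pos rfl] at hjv ⊢; split_ifs <;> subst_vars <;> omega
      · simp only [hij, if_false] at hjv; split_ifs <;> subst_vars <;> omega

end MyAux3
section MyAux4

lemma coeff_D1mon (u d' : ℕ →₀ ℕ) :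
    MvPolynomial.coeff d' (D1mon u) = ∑ j ∈ u.support, (u j : ℝ) *
      (if u - Finsupp.single j 1 + Finsupp.single (j + 1) 1 = d' then 1 else 0) := by
  rw [D1mon, MvPolynomial.coeff_sum]
  refine Finset.sum_congr rfl fun j hj => ?_
  rw [MvPolynomial.coeff_smul, MvPolynomial.coeff_monomial, smul_eq_mul]

lemma coeff_D2mon (u d' : ℕ →₀ ℕ) :
    MvPolynomial.coeff d' (D2mon u) = ∑ j ∈ u.support, (u j : ℝ) *
      (if u - Finsupp.single j 1 + Finsupp.single (j + 2) 1 = d' then 1 else 0) := by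
  rw [D2mon, MvPolynomial.coeff_sum]
  refine Finset.sum_congr rfl fun j hj => ?_
  rw [MvPolynomial.coeff_smul, MvPolynomial.coeff_monomial, smul_eq_mul]

lemma cancel (d d' : ℕ →₀ ℕ) (hng : ¬ GoodL d d') :
    ∑ i ∈ d.support, (d i : ℝ) *
      MvPolynomial.coeff d' (D1mon (d - Finsupp.single i 1 + Finsupp.single (i + 1) 1))
    = MvPolynomial.coeff d' (D2mon d) := by
  rw [coeff_D2mon]
  refine Finset.sum_congr rfl fun i hi => ?_
  have hdi : 1 ≤ d i := by
    have := Finsupp.mem_support_iff.1 hi; omega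
  congr 1
  rw [coeff_D1mon]
  by_cases h : d - Finsupp.single i 1 + Finsupp.single (i + 2) 1 = d'
  · rw [if_pos h]
    have h0 : d (i + 1) = 0 := by
      by_contra h0
      exact hng (h ▸ bad_good hdi (by omega))
    have hmem : (i + 1) ∈ (d - Finsupp.single i 1 + Finsupp.single (i + 1) 1).support := by
      rw [Finsupp.mem_support_iff, Finsupp.add_apply, Finsupp.tsub_apply,
        Finsupp.single_apply, Finsupp.single_apply]
      split_ifs <;> omega
    rw [Finset.sum_eq_single_of_mem (i + 1) hmem (fun j hj hne => by
      rw [if_neg, mul_zero]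
      intro heq
      rcases key_step hdi hj heq with hg | ⟨hj1, _, _⟩
      · exact hng hg
      · exact hne hj1)]
    have hval : ((d - Finsupp.single i 1 + Finsupp.single (i + 1) 1 : ℕ →₀ ℕ) (i + 1)) = 1 := by
      rw [Finsupp.add_apply, Finsupp.tsub_apply, Finsupp.single_apply, Finsupp.single_apply]
      split_ifs <;> omega
    have hfe : d - Finsupp.single i 1 + Finsupp.single (i + 1) 1 - Finsupp.single (i + 1) 1
        + Finsupp.single (i + 1 + 1) 1 = d' := by
      rw [← h]
      ext x
      simp only [Finsupp.add_apply, Finsupp.tsub_apply, Finsupp.single_apply]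
      split_ifs <;> subst_vars <;> omega
    rw [hval, if_pos hfe]
    norm_num
  · rw [if_neg h]
    refine Finset.sum_eq_zero fun j hj => ?_
    rw [if_neg, mul_zero]
    intro heq
    rcases key_step hdi hj heq with hg | ⟨_, _, hd'⟩
    · exact hng hg
    · exact h hd'.symm

end MyAux4
section MyAux5

lemma extendMon_op_eq (f) (P : MvPolynomial ℕ ℝ) :
    extendMon f P = ∑ d ∈ P.support, (MvPolynomial.coeff d P) • f d := rfl

lemma D1op_eq (P : MvPolynomial ℕ ℝ) :
    D1op P = ∑ d ∈ P.support, (MvPolynomial.coeff d P) • D1mon d := rfl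

lemma D2op_eq (P : MvPolynomial ℕ ℝ) :
    D2op P = ∑ d ∈ P.support, (MvPolynomial.coeff d P) • D2mon d := rfl

lemma extendMon_smul_D1mon (f) (c : ℝ) (d : ℕ →₀ ℕ) :
    extendMon f (c • D1mon d) = ∑ i ∈ d.support,
      (c * d i) • f (d - Finsupp.single i 1 + Finsupp.single (i + 1) 1) := by
  have : c • D1mon d = ∑ i ∈ d.support,
      monomial (d - Finsupp.single i 1 + Finsupp.single (i + 1) 1) (c * d i) := by
    rw [D1mon, Finset.smul_sum]
    refine Finset.sum_congr rfl fun i hi => ?_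
    rw [smul_smul, MvPolynomial.smul_monomial, smul_eq_mul, mul_one]
  rw [this, extendMon_sum]
  exact Finset.sum_congr rfl fun i hi => extendMon_monomial _ _ _

lemma coeff_Lop_eq_zero {P : MvPolynomial ℕ ℝ} {d' : ℕ →₀ ℕ}
    (h : ∀ d ∈ P.support, ¬ GoodL d d') : MvPolynomial.coeff d' (Lop P) = 0 := by
  rw [Lop, MvPolynomial.coeff_smul, MvPolynomial.coeff_sub]
  have key : MvPolynomial.coeff d' (D1op (D1op P)) = MvPolynomial.coeff d' (D2op P) := by
    rw [D1op_eq P, show D1op = extendMon D1mon from rfl, extendMon_sum,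
      D2op_eq, MvPolynomial.coeff_sum, MvPolynomial.coeff_sum]
    refine Finset.sum_congr rfl fun d hd => ?_
    rw [extendMon_smul_D1mon, MvPolynomial.coeff_sum, MvPolynomial.coeff_smul, smul_eq_mul,
      ← cancel d d' (h d hd), Finset.mul_sum]
    refine Finset.sum_congr rfl fun i hi => ?_
    rw [MvPolynomial.coeff_smul, smul_eq_mul, mul_assoc]
  rw [key, sub_self, smul_zero]

lemma mem_support_Lop {P : MvPolynomial ℕ ℝ} {d' : ℕ →₀ ℕ}
    (h : d' ∈ (Lop P).support) : ∃ d ∈ P.support, GoodL d d' := by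
  by_contra hc
  push_neg at hc
  exact MvPolynomial.mem_support_iff.1 h (coeff_Lop_eq_zero hc)

end MyAux5
section MyAux6

lemma mem_support_finset_sum {ι : Type*} {s : Finset ι} {f : ι → MvPolynomial ℕ ℝ} {d'}
    (h : d' ∈ (∑ i ∈ s, f i).support) : ∃ i ∈ s, d' ∈ (f i).support := by
  by_contra hc
  push_neg at hc
  apply MvPolynomial.mem_support_iff.1 h
  rw [MvPolynomial.coeff_sum]
  exact Finset.sum_eq_zero fun i hi => MvPolynomial.notMem_support_iff.1 (hc i hi)

lemma single_add_single_le {d : ℕ →₀ ℕ} {i j : ℕ}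
    (hle : Finsupp.single i 1 + Finsupp.single j 1 ≤ d) : 1 ≤ d i ∧ 1 ≤ d j := by
  have h1 := Finsupp.le_def.1 hle i
  have h2 := Finsupp.le_def.1 hle j
  simp only [Finsupp.add_apply, Finsupp.single_apply] at h1 h2
  split_ifs at h1 h2 <;> omega

lemma OKP_Lop {c W : ℕ} {P : MvPolynomial ℕ ℝ} (h : OKP c W P) : OKP c (W + 2) (Lop P) := by
  intro d' hd'
  obtain ⟨d, hd, i, j, hle, rfl⟩ := mem_support_Lop hd'
  obtain ⟨hW, hidx⟩ := h d hd
  obtain ⟨hdi, hdj⟩ := single_add_single_le hle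
  set g : ℕ →₀ ℕ := Finsupp.single i 1 + Finsupp.single j 1 with hg
  have hs : d - g + g = d := tsub_add_cancel_of_le hle
  have hwg : wdeg g = i + j := by rw [hg, wdeg_add, wdeg_single, wdeg_single]; ring
  have hdg : dgr g = 2 := by rw [hg, dgr_add, dgr_single, dgr_single]
  have hwd : wdeg d = wdeg (d - g) + (i + j) := by
    conv_lhs => rw [← hs]
    rw [wdeg_add, hwg]
  have hdd : dgr d = dgr (d - g) + 2 := by
    conv_lhs => rw [← hs]
    rw [dgr_add, hdg]
  have hwd' : wdeg (d - g + Finsupp.single (i + 1) 1 + Finsupp.single (j + 1) 1)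
      = wdeg d + 2 := by
    rw [wdeg_add, wdeg_add, wdeg_single, wdeg_single]; omega
  have hdd' : dgr (d - g + Finsupp.single (i + 1) 1 + Finsupp.single (j + 1) 1) = dgr d := by
    rw [dgr_add, dgr_add, dgr_single, dgr_single]; omega
  refine ⟨by omega, fun x hx => ?_⟩
  rw [hwd', hdd']
  have hx' := Finsupp.mem_support_iff.1 hx
  rw [Finsupp.add_apply, Finsupp.add_apply] at hx'
  have hval : (d - g) x ≠ 0 ∨ x = i + 1 ∨ x = j + 1 := by
    rcases eq_or_ne x (i + 1) with h1 | h1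
    · exact Or.inr (Or.inl h1)
    rcases eq_or_ne x (j + 1) with h2 | h2
    · exact Or.inr (Or.inr h2)
    left
    rw [Finsupp.single_apply, Finsupp.single_apply, if_neg (fun hh => h1 hh.symm),
      if_neg (fun hh => h2 hh.symm)] at hx'
    omega
  rcases hval with h1 | h1 | h1
  · have hxd : x ∈ d.support := by
      rw [Finsupp.mem_support_iff]
      rw [Finsupp.tsub_apply] at h1
      omega
    have := hidx x hxd
    omega
  · subst h1
    have := hidx i (Finsupp.mem_support_iff.2 (by omega))
    omega
  · subst h1
    have := hidx j (Finsupp.mem_support_iff.2 (by omega))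
    omega

end MyAux6
section MyAux7

lemma mem_support_Hmon {d d' : ℕ →₀ ℕ} (h : d' ∈ (Hmon d).support) :
    ∃ i ∈ d.support, ∃ l, 1 ≤ l ∧ l < i ∧
      d' = d - Finsupp.single i 1 + Finsupp.single (1 + l) 1 + Finsupp.single (1 + i - l) 1 := by
  rw [Hmon] at h
  have h1 := MvPolynomial.support_smul h
  obtain ⟨i, hi, h2⟩ := mem_support_finset_sum h1
  obtain ⟨l, hl, h3⟩ := mem_support_finset_sum h2
  have h4 := MvPolynomial.support_smul h3
  rw [MvPolynomial.support_monomial, if_neg (one_ne_zero)] at h4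
  rw [Finset.mem_singleton] at h4
  rw [Finset.mem_Ico] at hl
  exact ⟨i, hi, l, hl.1, hl.2, h4⟩

lemma OKP_Hop {c W : ℕ} {P : MvPolynomial ℕ ℝ} (h : OKP c W P) : OKP c (W + 2) (Hop P) := by
  intro d' hd'
  obtain ⟨d, hd, hd'2⟩ := mem_support_extendMon hd'
  obtain ⟨i, hi, l, hl1, hl2, rfl⟩ := mem_support_Hmon hd'2
  obtain ⟨hW, hidx⟩ := h d hd
  have hdi : 1 ≤ d i := by have := Finsupp.mem_support_iff.1 hi; omega
  have hle : Finsupp.single i 1 ≤ d := by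
    rw [Finsupp.le_def]
    intro x
    rw [Finsupp.single_apply]
    split_ifs <;> subst_vars <;> omega
  have hs : d - Finsupp.single i 1 + Finsupp.single i 1 = d := tsub_add_cancel_of_le hle
  have hwd : wdeg d = wdeg (d - Finsupp.single i 1) + i := by
    conv_lhs => rw [← hs]
    rw [wdeg_add, wdeg_single]; ring
  have hdd : dgr d = dgr (d - Finsupp.single i 1) + 1 := by
    conv_lhs => rw [← hs]
    rw [dgr_add, dgr_single]
  have hwd' : wdeg (d - Finsupp.single i 1 + Finsupp.single (1 + l) 1
      + Finsupp.single (1 + i - l) 1) = wdeg d + 2 := by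
    rw [wdeg_add, wdeg_add, wdeg_single, wdeg_single]; omega
  have hdd' : dgr (d - Finsupp.single i 1 + Finsupp.single (1 + l) 1
      + Finsupp.single (1 + i - l) 1) = dgr d + 1 := by
    rw [dgr_add, dgr_add, dgr_single, dgr_single]; omega
  refine ⟨by omega, fun x hx => ?_⟩
  rw [hwd', hdd']
  have hbound := hidx i hi
  have hx' := Finsupp.mem_support_iff.1 hx
  rw [Finsupp.add_apply, Finsupp.add_apply] at hx'
  have hval : ((d - Finsupp.single i 1 : ℕ →₀ ℕ) x) ≠ 0 ∨ x = 1 + l ∨ x = 1 + i - l := by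
    rcases eq_or_ne x (1 + l) with h1 | h1
    · exact Or.inr (Or.inl h1)
    rcases eq_or_ne x (1 + i - l) with h2 | h2
    · exact Or.inr (Or.inr h2)
    left
    rw [Finsupp.single_apply, Finsupp.single_apply, if_neg (fun hh => h1 hh.symm),
      if_neg (fun hh => h2 hh.symm)] at hx'
    omega
  rcases hval with h1 | h1 | h1
  · have hxd : x ∈ d.support := by
      rw [Finsupp.mem_support_iff]
      rw [Finsupp.tsub_apply] at h1
      omega
    have := hidx x hxd
    omega
  · subst h1; omega
  · subst h1; omega

end MyAux7
section MyAux8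

lemma X_as_monomial (a : ℕ) : (X a : MvPolynomial ℕ ℝ) = monomial (Finsupp.single a 1) 1 := by
  rw [← MvPolynomial.X_pow_eq_monomial, pow_one]

lemma OKP_Apoly (n : ℕ) : OKP 4 (2 * n + 2) (Apoly n) := by
  intro d hd
  rw [Apoly, MvPolynomial.support_neg] at hd
  obtain ⟨k, hk, hd2⟩ := mem_support_finset_sum hd
  rw [Finset.mem_Ico] at hk
  have h3 := MvPolynomial.support_smul hd2
  have hXX : (X (1 + k) * X (1 + n - k) * X n : MvPolynomial ℕ ℝ)
      = monomial (Finsupp.single (1 + k) 1 + Finsupp.single (1 + n - k) 1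
        + Finsupp.single n 1) 1 := by
    rw [X_as_monomial, X_as_monomial, X_as_monomial, MvPolynomial.monomial_mul,
      MvPolynomial.monomial_mul, one_mul, one_mul]
  rw [hXX, MvPolynomial.support_monomial, if_neg one_ne_zero, Finset.mem_singleton] at h3
  subst h3
  have hwd : wdeg (Finsupp.single (1 + k) 1 + Finsupp.single (1 + n - k) 1
      + Finsupp.single n 1) = 2 * n + 2 := by
    rw [wdeg_add, wdeg_add, wdeg_single, wdeg_single, wdeg_single]; omega
  have hdd : dgr (Finsupp.single (1 + k) 1 + Finsupp.single (1 + n - k) 1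
      + Finsupp.single n 1) = 3 := by
    rw [dgr_add, dgr_add, dgr_single, dgr_single, dgr_single]
  refine ⟨by omega, fun x hx => ?_⟩
  rw [hwd, hdd]
  have hx' := Finsupp.mem_support_iff.1 hx
  rw [Finsupp.add_apply, Finsupp.add_apply, Finsupp.single_apply, Finsupp.single_apply,
    Finsupp.single_apply] at hx'
  have hxle : x ≤ n := by split_ifs at hx' <;> omega
  omega

lemma Rinv : ∀ m : ℕ, OKP 4 (2 * m) (Rpoly m)
  | 0 => by rw [show Rpoly 0 = 0 from rfl]; exact OKP_zero _ _
  | 1 => by rw [show Rpoly 1 = 0 from rfl]; exact OKP_zero _ _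
  | 2 => by rw [show Rpoly 2 = 0 from rfl]; exact OKP_zero _ _
  | (m + 3) => by
    have ih := Rinv (m + 2)
    rw [show Rpoly (m + 3)
      = Apoly (m + 2) + Lop (Rpoly (m + 2)) + Hop (Rpoly (m + 2)) from rfl]
    have hA : OKP 4 (2 * (m + 3)) (Apoly (m + 2)) := by
      have := OKP_Apoly (m + 2)
      exact OKP_mono le_rfl (by omega) this
    have hL : OKP 4 (2 * (m + 3)) (Lop (Rpoly (m + 2))) :=
      OKP_mono le_rfl (by omega) (OKP_Lop ih)
    have hH : OKP 4 (2 * (m + 3)) (Hop (Rpoly (m + 2))) :=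
      OKP_mono le_rfl (by omega) (OKP_Hop ih)
    exact OKP_add (OKP_add hA hL) hH

end MyAux8

/-- Vanishing of coefficients: if `α ∈ I_{r,n+1}` with `r > 3 + k` and largest part
`α₁ = n - k`, then `c_α^{(n+1)} = 0`. -/
theorem statement15 (n : ℕ) (hn : 2 ≤ n) (k : ℕ) (hk : k ≤ n - 2)
    (r : ℕ) (hr : 3 + k < r) (α : Multiset ℕ) (hα : α ∈ Ipart r (n + 1))
    (hmem : (n - k) ∈ α) (hmax : ∀ a ∈ α, a ≤ n - k) :
    coeffR (n + 1) α = 0 := by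
  by_contra hne
  have hd : Multiset.toFinsupp α ∈ (Rpoly (n + 1)).support :=
    MvPolynomial.mem_support_iff.2 hne
  obtain ⟨hW, hidx⟩ := Rinv (n + 1) _ hd
  have hcard : Multiset.card α = r := by
    rw [Ipart, Finset.mem_filter] at hα
    exact hα.2.1
  have hdgr : dgr (Multiset.toFinsupp α) = r := by
    rw [dgr, Finsupp.sum]
    rw [show (Multiset.toFinsupp α).support = α.toFinset from Multiset.toFinsupp_support α]
    simp only [Multiset.toFinsupp_apply]
    rw [Multiset.toFinset_sum_count_eq, hcard]
  have hns : (n - k) ∈ (Multiset.toFinsupp α).support := by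
    rw [Multiset.toFinsupp_support]
    exact Multiset.mem_toFinset.2 hmem
  have hb := hidx (n - k) hns
  rw [hdgr] at hb
  omega

end
end
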